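/- arXiv:1805.10903 — 5 statements merged into one kernel-verified Lean document; each statement's English description precedes it below -/
import Mathlib

section
/- Let S be a pseudo-symmetric numerical semigroup with Frobenius number g and multiplicity μ (the least nonzero element of S), and let S' = S ∪ {g}. If |ℕ \ S| ≥ 4, then the two distinct elements a := g/2 and b := g - μ satisfy: a, b ∉ S', a + m ∈ S' and b + m ∈ S' for every nonzero m ∈ S' (i.e., a, b ∈ (S' - M_{S'}) \ S' where M_{S'} = S' \ {0}), and 2a, 2b, a+b ∈ S'. -/
def IsNumericalSemigroup (S : Set ℕ) : Prop :=
  0 ∈ S ∧ (∀ a ∈ S, ∀ b ∈ S, a + b ∈ S) ∧ Sᶜ.Finite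

def IsFrobenius (S : Set ℕ) (g : ℕ) : Prop :=
  g ∉ S ∧ ∀ x : ℕ, g < x → x ∈ S

def IsPseudoSymmetric (S : Set ℕ) (g : ℕ) : Prop :=
  Even g ∧ ∀ a : ℕ, a ≠ g / 2 → a ∈ S ∨ g - a ∈ S

theorem stmt_3 (S : Set ℕ) (g μ : ℕ) (hS : IsNumericalSemigroup S)
    (hg : IsFrobenius S g) (hps : IsPseudoSymmetric S g)
    (hμ : μ ∈ S ∧ μ ≠ 0 ∧ ∀ x ∈ S, x ≠ 0 → μ ≤ x)
    (hcard : 4 ≤ Sᶜ.ncard)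
    (S' : Set ℕ) (hS' : S' = S ∪ {g})
    (a b : ℕ) (ha : a = g / 2) (hb : b = g - μ) :
    a ≠ b ∧ a ∉ S' ∧ b ∉ S' ∧
      (∀ m ∈ S', m ≠ 0 → a + m ∈ S' ∧ b + m ∈ S') ∧
      2 * a ∈ S' ∧ 2 * b ∈ S' ∧ a + b ∈ S' := by
  obtain ⟨h0S, hadd, hfin⟩ := hS
  obtain ⟨hgnS, hgt⟩ := hg
  obtain ⟨⟨k, hk⟩, hpsym⟩ := hps
  obtain ⟨hμS, hμ0, hμmin⟩ := hμ
  subst hk hS' hb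
  have hak : a = k := by omega
  subst hak
  -- basic facts
  have hg0 : a ≠ 0 := by
    intro h
    subst h
    exact hgnS h0S
  have h1nS : (1 : ℕ) ∉ S := by
    intro h1
    have hall : ∀ n : ℕ, n ∈ S := by
      intro n
      induction n with
      | zero => exact h0S
      | succ m ih => exact hadd m ih 1 h1
    exact hgnS (hall _)
  have hμ2 : 2 ≤ μ := by
    have h1 : μ ≠ 1 := by
      intro h
      exact h1nS (h ▸ hμS)
    omega
  have hnotS : ∀ x : ℕ, x ≠ 0 → x < μ → x ∉ S := by
    intro x hx hlt hxS
    have := hμmin x hxS hx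
    omega
  -- a ≥ 3
  have hsub : Sᶜ ⊆ Set.Icc 1 (a + a) := by
    intro x hx
    simp only [Set.mem_compl_iff] at hx
    simp only [Set.mem_Icc]
    constructor
    · rcases Nat.eq_zero_or_pos x with h | h
      · exact absurd (h ▸ h0S) hx
      · omega
    · by_contra h
      exact hx (hgt x (by omega))
  have hIcc : ∀ n : ℕ, (Set.Icc 1 n).ncard = n := by
    intro n
    rw [← Finset.coe_Icc, Set.ncard_coe_finset, Nat.card_Icc]
    omega
  have hk2 : 2 ≤ a := by
    have h := Set.ncard_le_ncard hsub (Set.finite_Icc _ _)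
    rw [hIcc] at h
    omega
  have hk3 : 3 ≤ a := by
    by_contra h
    have hk2' : a = 2 := by omega
    subst hk2'
    have heq : Sᶜ = Set.Icc 1 4 := by
      apply Set.eq_of_subset_of_ncard_le hsub _ (Set.finite_Icc _ _)
      rw [hIcc]
      omega
    have h1 : (1 : ℕ) ∉ S := by
      have : (1 : ℕ) ∈ Sᶜ := heq ▸ (by simp [Set.mem_Icc])
      exact this
    have h3 : (3 : ℕ) ∉ S := by
      have : (3 : ℕ) ∈ Sᶜ := heq ▸ (by simp [Set.mem_Icc])
      exact this
    rcases hpsym 1 (by omega) with h | h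
    · exact h1 h
    · exact h3 (by norm_num at h ⊢; exact h)
  have hknS : a ∉ S := by
    intro h
    exact hgnS (hadd a h a h)
  have hμk : μ ≠ a := by
    intro h
    exact hknS (h ▸ hμS)
  have hμle : μ ≤ a + 1 := by
    by_contra h
    have h1 : a + 1 ∉ S := hnotS (a + 1) (by omega) (by omega)
    have h2 : a - 1 ∉ S := hnotS (a - 1) (by omega) (by omega)
    rcases hpsym (a + 1) (by omega) with hh | hh
    · exact h1 hh
    · have : a + a - (a + 1) = a - 1 := by omega
      exact h2 (this ▸ hh)
  have hbnS : a + a - μ ∉ S := by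
    intro h
    have h2 := hadd _ h μ hμS
    have heq : a + a - μ + μ = a + a := by omega
    rw [heq] at h2
    exact hgnS h2
  have hps_add : ∀ m ∈ S, m ≠ 0 → a + m ∈ S ∪ {a + a} := by
    intro m hm hm0
    rcases lt_trichotomy m a with h | h | h
    · left
      rcases hpsym (a + m) (by omega) with hh | hh
      · exact hh
      · exfalso
        have heq : a + a - (a + m) = a - m := by omega
        rw [heq] at hh
        have h2 := hadd _ hh m hm
        have : a - m + m = a := by omega
        rw [this] at h2
        exact hknS h2
    · right
      simp [h]
    · left
      exact hgt _ (by omega)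
  refine ⟨by omega, ?_, ?_, ?_, ?_, ?_, ?_⟩
  · simp only [Set.mem_union, Set.mem_singleton_iff]
    push_neg
    exact ⟨hknS, by omega⟩
  · simp only [Set.mem_union, Set.mem_singleton_iff]
    push_neg
    exact ⟨hbnS, by omega⟩
  · intro m hm hm0
    simp only [Set.mem_union, Set.mem_singleton_iff] at hm
    rcases hm with hm | hm
    · have hμm : μ ≤ m := hμmin m hm hm0
      constructor
      · exact hps_add m hm hm0
      · rcases eq_or_lt_of_le hμm with h | h
        · right
          simp only [Set.mem_singleton_iff]
          omega
        · left
          exact hgt _ (by omega)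
    · subst hm
      exact ⟨Or.inl (hgt _ (by omega)), Or.inl (hgt _ (by omega))⟩
  · right
    simp only [Set.mem_singleton_iff]
    omega
  · by_cases h : μ = a + 1
    · have h2 : (2 : ℕ) ∉ S := hnotS 2 (by omega) (by omega)
      rcases hpsym 2 (by omega) with hh | hh
      · exact absurd hh h2
      · left
        have : 2 * (a + a - μ) = a + a - 2 := by omega
        rw [this]
        exact hh
    · left
      exact hgt _ (by omega)
  · by_cases h : μ = a + 1
    · rcases hpsym 1 (by omega) with hh | hh
      · exact absurd hh h1nS
      · left
        have : a + (a + a - μ) = a + a - 1 := by omega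
        rw [this]
        exact hh
    · left
      exact hgt _ (by omega)
end

section
/- Let S be a pseudo-symmetric numerical semigroup with Frobenius number g, multiplicity μ, and |ℕ \ S| ≥ 4. Then g > μ, and moreover if g < 2μ then g = 2μ - 2 and μ > 3. -/
theorem stmt_4 (S : Set ℕ) (g μ : ℕ) (hS : IsNumericalSemigroup S)
    (hg : IsFrobenius S g) (hps : IsPseudoSymmetric S g)
    (hμ : μ ∈ S ∧ μ ≠ 0 ∧ ∀ x ∈ S, x ≠ 0 → μ ≤ x)
    (hcard : 4 ≤ Sᶜ.ncard) :
    μ < g ∧ (g < 2 * μ → g = 2 * μ - 2 ∧ 3 < μ) := by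
  obtain ⟨h0, hadd, hfin⟩ := hS
  obtain ⟨hgS, hgt⟩ := hg
  obtain ⟨hev, hsym⟩ := hps
  obtain ⟨hμS, hμ0, hμmin⟩ := hμ
  -- Sᶜ ⊆ Icc 1 g
  have hsub : Sᶜ ⊆ ↑(Finset.Icc 1 g) := by
    intro x hx
    simp only [Finset.coe_Icc, Set.mem_Icc]
    refine ⟨?_, ?_⟩
    · rcases Nat.eq_zero_or_pos x with h | h
      · exact absurd (h ▸ h0) hx
      · exact h
    · by_contra h
      exact hx (hgt x (by omega))
  have hgle : Sᶜ.ncard ≤ g := by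
    have := Set.ncard_le_ncard hsub (Finset.Icc 1 g).finite_toSet
    rw [Set.ncard_coe_finset, Nat.card_Icc] at this
    omega
  have hg4 : 4 ≤ g := le_trans hcard hgle
  have hg2 : g = 2 * (g / 2) := by
    have := Nat.div_mul_cancel hev.two_dvd
    omega
  -- μ < g
  have hμlt : μ < g := by
    by_contra h
    push_neg at h
    rcases hsym 1 (by omega) with h1 | h1
    · have := hμmin 1 h1 one_ne_zero
      omega
    · have h1' : g - 1 ≠ 0 := by omega
      have := hμmin _ h1 h1'
      omega
  refine ⟨hμlt, fun hlt => ?_⟩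
  have hμ2 : 2 ≤ μ := by
    by_contra h
    have : μ = 1 := by omega
    subst this
    omega
  -- g = 2μ - 2
  have hgeq : g = 2 * μ - 2 := by
    by_contra hne
    have hle : g ≤ 2 * μ - 3 := by omega
    have haS : μ - 1 ∉ S := by
      intro h
      have := hμmin _ h (by omega)
      omega
    rcases hsym (μ - 1) (by omega) with h | h
    · exact haS h
    · have := hμmin _ h (by omega)
      omega
  refine ⟨hgeq, ?_⟩
  -- μ > 3
  by_contra h
  have hμ3 : μ = 3 := by omega
  subst hμ3
  have hg4' : g = 4 := by omega
  subst hg4'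
  have hsub2 : Sᶜ ⊆ ({1, 2, 4} : Finset ℕ) := by
    intro x hx
    have hx0 : x ≠ 0 := fun h => hx (h ▸ h0)
    have hx3 : x ≠ 3 := fun h => hx (h ▸ hμS)
    have hx4 : x ≤ 4 := by
      by_contra h
      exact hx (hgt x (by omega))
    simp only [Finset.coe_insert, Set.mem_insert_iff, Finset.coe_singleton,
      Set.mem_singleton_iff]
    omega
  have := Set.ncard_le_ncard hsub2 ({1, 2, 4} : Finset ℕ).finite_toSet
  rw [Set.ncard_coe_finset] at this
  simp at this
  omega
end

section
/- Let K be a finite field with q elements, A = K[e]/(e^n) with basis e_0,...,e_{n-1}, and define V ∼ W for subspaces V, W of A iff γV = W for some unit γ ∈ A^× (equivalently γ with nonzero constant term). Then each ∼-equivalence class of 2-dimensional subspaces containing e_0 but not e_{n-1} has cardinality at most q, and hence the number of such equivalence classes is at least (q^{n-2} - 1)/(q - 1) ≥ q^{n-3} (for n ≥ 4). -/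
/-!
Write `A = K[e]/(e^n)` and let `φ : A → K` be evaluation at `e = 0`. A plane `V ∋ 1` is
`span {1, u}` with `φ u = 0`, so `u` is not a unit. If `1 ∈ γV` for a unit `γ`, then
`γ⁻¹ = a + b u ∈ V` with `a ≠ 0`, hence `γV = {x | (1 + (b/a) u) x ∈ V}`: the class of `V` is
parametrised by `K`. On the other hand, planes through `1` avoiding `e^(n-1)` correspond to the
points of the projective space `ℙ(A/K)` other than `[e^(n-1)]`; there are
`q + q² + ⋯ + q^(n-2)` of them. Dividing by the class size `q` bounds the number of classes.
-/

open Polynomial Pointwise Module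
open scoped LinearAlgebra.Projectivization

theorem Nat.card_le_mul_card_quot {α : Type*} [Finite α] {r : α → α → Prop} (hr : Equivalence r)
    {k : ℕ} (hk : ∀ a, Nat.card {b // r a b} ≤ k) : Nat.card α ≤ k * Nat.card (Quot r) := by
  classical
  have : Fintype (Quot r) := Fintype.ofFinite _
  have hfiber (c : Quot r) : Nat.card {a // Quot.mk r a = c} ≤ k := by
    obtain ⟨a, rfl⟩ := Quot.mk_surjective c
    refine le_of_eq_of_le (Nat.card_congr (Equiv.subtypeEquivRight fun b => ?_)) (hk a)
    rw [Quot.eq, hr.eqvGen_iff]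
    exact ⟨hr.symm, hr.symm⟩
  calc Nat.card α = Nat.card (Σ c : Quot r, {a // Quot.mk r a = c}) :=
        Nat.card_congr (Equiv.sigmaFiberEquiv _).symm
    _ = ∑ c, Nat.card {a // Quot.mk r a = c} := Nat.card_sigma
    _ ≤ ∑ _c : Quot r, k := Finset.sum_le_sum fun c _ => hfiber c
    _ = k * Nat.card (Quot r) := by simp [Nat.card_eq_fintype_card, mul_comm]

theorem MulAction.equivalence_exists_smul_eq (G α : Type*) [Group G] [MulAction G α] :
    Equivalence fun a b : α => ∃ g : G, g • a = b :=
  ⟨fun a => ⟨1, one_smul G a⟩, fun ⟨g, h⟩ => ⟨g⁻¹, h ▸ inv_smul_smul g _⟩,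
    fun ⟨g, hg⟩ ⟨h, hh⟩ => ⟨h * g, by rw [mul_smul, hg, hh]⟩⟩

namespace Submodule

variable {K E : Type*} [Field K] [AddCommGroup E] [Module K E]

theorem finrank_comap_mkQ [FiniteDimensional K E] (p : Submodule K E) (H : Submodule K (E ⧸ p)) :
    finrank K (H.comap p.mkQ) = finrank K H + finrank K p := by
  set f := p.mkQ.domRestrict (H.comap p.mkQ)
  have hp : p ≤ H.comap p.mkQ := fun x hx => by
    simp [mem_comap, (Quotient.mk_eq_zero p).2 hx]
  have hrange : LinearMap.range f = H := by
    rw [LinearMap.range_domRestrict, map_comap_eq_of_surjective p.mkQ_surjective]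
  have hker : LinearMap.ker f = p.comap (H.comap p.mkQ).subtype := by
    ext x; simp [f]
  rw [← f.finrank_range_add_finrank_ker, hrange, hker, (comapSubtypeEquivOfLe hp).finrank_eq]

theorem card_finrank_eq_one_notMem_add_one [Finite K] [FiniteDimensional K E] {x : E}
    (hx : x ≠ 0) :
    Nat.card {H : Submodule K E // finrank K H = 1 ∧ x ∉ H} + 1 = Nat.card (ℙ K E) := by
  have : Finite E := Module.finite_of_finite K
  have hmem (H : Submodule K E) (hH : finrank K H = 1) : x ∈ H ↔ H = K ∙ x := by
    refine ⟨fun h => (eq_of_le_of_finrank_eq ((span_singleton_le_iff_mem x H).2 h) ?_).symm,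
      fun h => h ▸ mem_span_singleton_self x⟩
    rw [finrank_span_singleton hx, hH]
  have hset : {H : Submodule K E | finrank K H = 1 ∧ x ∉ H} =
      {H : Submodule K E | finrank K H = 1} \ {K ∙ x} := by
    ext H
    simp only [Set.mem_ofPred_eq, Set.mem_sdiff, Set.mem_singleton_iff]
    exact and_congr_right fun hH => not_congr (hmem H hH)
  rw [Nat.card_congr (Projectivization.equivSubmodule K E)]
  change Set.ncard {H : Submodule K E | finrank K H = 1 ∧ x ∉ H} + 1 =
    Set.ncard {H : Submodule K E | finrank K H = 1}
  rw [hset]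
  exact Set.ncard_sdiff_singleton_add_one (finrank_span_singleton hx)

theorem card_finrank_eq_two_mem_notMem_add_one [Finite K] [FiniteDimensional K E] {u w : E}
    (hu : u ≠ 0) (hw : w ∉ K ∙ u) :
    Nat.card {W : Submodule K E // finrank K W = 2 ∧ u ∈ W ∧ w ∉ W} + 1 =
      ∑ i ∈ Finset.range (finrank K E - 1), Nat.card K ^ i := by
  set p := K ∙ u
  have hp : finrank K p = 1 := finrank_span_singleton hu
  have hwq : p.mkQ w ≠ 0 := by simpa [Quotient.mk_eq_zero] using hw
  have hcomap_map {W : Submodule K E} (huW : u ∈ W) : (W.map p.mkQ).comap p.mkQ = W := by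
    rw [comap_map_mkQ, sup_eq_right.2 ((span_singleton_le_iff_mem u W).2 huW)]
  let e : {H : Submodule K (E ⧸ p) // finrank K H = 1 ∧ p.mkQ w ∉ H} ≃
      {W : Submodule K E // finrank K W = 2 ∧ u ∈ W ∧ w ∉ W} :=
    { toFun H := ⟨H.1.comap p.mkQ, by rw [finrank_comap_mkQ, H.2.1, hp],
        by simp [(Quotient.mk_eq_zero p).2 (mem_span_singleton_self u)], H.2.2⟩
      invFun W := ⟨W.1.map p.mkQ, by
          have := finrank_comap_mkQ p (W.1.map p.mkQ)
          rw [hcomap_map W.2.2.1, W.2.1, hp] at this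
          omega,
        fun h => W.2.2.2 (by rwa [← mem_comap, hcomap_map W.2.2.1] at h)⟩
      left_inv H := Subtype.ext (map_comap_eq_of_surjective p.mkQ_surjective H.1)
      right_inv W := Subtype.ext (hcomap_map W.2.2.1) }
  rw [← Nat.card_congr e, card_finrank_eq_one_notMem_add_one hwq,
    Projectivization.card_of_finrank K _ (finrank_quotient p), hp]

end Submodule

section UnitOrbit

variable {K A : Type*} [Field K] [CommRing A] [Algebra K A]

theorem exists_eq_span_pair_of_finrank_eq_two (φ : A →ₐ[K] K) {V : Submodule K A}
    (hV : finrank K V = 2) (h1 : (1 : A) ∈ V) : ∃ u, φ u = 0 ∧ V = Submodule.span K {1, u} := by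
  have : FiniteDimensional K V := Module.finite_of_finrank_eq_succ hV
  have hker : LinearMap.ker (φ.toLinearMap ∘ₗ V.subtype) ≠ ⊥ :=
    LinearMap.ker_ne_bot_of_finrank_lt (by rw [hV, finrank_self]; norm_num)
  obtain ⟨⟨u, huV⟩, hφu, hu0⟩ := (Submodule.ne_bot_iff _).1 hker
  replace hφu : φ u = 0 := hφu
  replace hu0 : u ≠ 0 := fun h => hu0 (Subtype.ext h)
  have hli : LinearIndependent K ![(1 : A), u] := by
    refine LinearIndependent.pair_iff.2 fun s t hst => ?_
    have hs : s = 0 := by simpa [hφu] using congrArg φ hst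
    subst hs
    exact ⟨rfl, (smul_eq_zero.1 (by simpa using hst)).resolve_right hu0⟩
  refine ⟨u, hφu, (Submodule.eq_of_le_of_finrank_eq ?_ ?_).symm⟩
  · rw [Submodule.span_le, Set.insert_subset_iff, Set.singleton_subset_iff]
    exact ⟨h1, huV⟩
  · rw [hV, ← Matrix.range_cons_cons_empty, finrank_span_eq_card hli, Fintype.card_fin]

theorem exists_smul_span_pair_eq_comap {u : A} (hu : ¬IsUnit u) {γ : Aˣ}
    (h : (1 : A) ∈ γ • Submodule.span K {1, u}) :
    ∃ c : K, γ • Submodule.span K {1, u} =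
      (Submodule.span K {1, u}).comap (LinearMap.mulLeft K (1 + c • u)) := by
  obtain ⟨v, hv, hγv⟩ := (Submodule.mem_smul_pointwise_iff_exists _ _ _).1 h
  obtain ⟨a, b, rfl⟩ := Submodule.mem_span_pair.1 hv
  have hinv : ((γ⁻¹ : Aˣ) : A) = a • 1 + b • u := Units.inv_eq_of_mul_eq_one_right hγv
  have ha : a ≠ 0 := by
    rintro rfl
    refine hu (isUnit_of_mul_isUnit_right (x := algebraMap K A b) ?_)
    rw [← Algebra.smul_def, ← zero_add (b • u), ← zero_smul K (1 : A), ← hinv]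
    exact (γ⁻¹).isUnit
  refine ⟨a⁻¹ * b, Submodule.ext fun x => ?_⟩
  have hx : ((γ⁻¹ : Aˣ) : A) * x = a • ((1 + (a⁻¹ * b) • u) * x) := by
    rw [hinv]
    simp only [add_mul, smul_mul_assoc, one_mul, smul_add, smul_smul, mul_inv_cancel_left₀ ha]
  have hmem : x ∈ γ • Submodule.span K {1, u} ↔ γ⁻¹ • x ∈ Submodule.span K {1, u} :=
    (Submodule.mem_smul_pointwise_iff_exists _ _ _).trans
      ⟨by rintro ⟨y, hy, rfl⟩; rwa [inv_smul_smul], fun h => ⟨_, h, smul_inv_smul γ x⟩⟩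
  rw [hmem, Submodule.mem_comap, LinearMap.mulLeft_apply, Units.smul_def, smul_eq_mul, hx,
    Submodule.smul_mem_iff _ ha]

theorem card_one_mem_units_smul_le [Finite K] (φ : A →ₐ[K] K) {V : Submodule K A}
    (hV : finrank K V = 2) (h1 : (1 : A) ∈ V) :
    Nat.card {W : Submodule K A // (1 : A) ∈ W ∧ ∃ γ : Aˣ, γ • V = W} ≤ Nat.card K := by
  obtain ⟨u, hφu, rfl⟩ := exists_eq_span_pair_of_finrank_eq_two φ hV h1
  have hu : ¬IsUnit u := fun h => by simpa [hφu] using h.map φ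
  let f (c : K) : Submodule K A :=
    (Submodule.span K {1, u}).comap (LinearMap.mulLeft K (1 + c • u))
  have hf (W : {W : Submodule K A // (1 : A) ∈ W ∧ ∃ γ : Aˣ, γ • Submodule.span K {1, u} = W}) :
      W.1 ∈ Set.range f := by
    obtain ⟨W, hW1, γ, rfl⟩ := W
    obtain ⟨c, hc⟩ := exists_smul_span_pair_eq_comap hu hW1
    exact ⟨c, hc.symm⟩
  calc _ ≤ Nat.card (Set.range f) :=
        Nat.card_le_card_of_injective (fun W => ⟨W.1, hf W⟩) fun W W' h =>
          Subtype.ext (by simpa using h)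
    _ ≤ Nat.card K := Finite.card_range_le f

end UnitOrbit

namespace AdjoinRoot

variable {K : Type*} [Field K] {n : ℕ}

theorem finrank_X_pow (n : ℕ) : finrank K (AdjoinRoot (X ^ n : K[X])) = n := by
  have := finrank_quotient_span_eq_natDegree (f := (X ^ n : K[X]))
  rwa [natDegree_X_pow] at this

theorem root_X_pow_pow_ne_zero {m : ℕ} (h : m < n) : root (X ^ n : K[X]) ^ m ≠ 0 := by
  rw [← mk_X, ← map_pow, Ne, mk_eq_zero, pow_dvd_pow_iff X_ne_zero not_isUnit_X]
  omega

noncomputable def constantCoeff (hn : n ≠ 0) : AdjoinRoot (X ^ n : K[X]) →ₐ[K] K :=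
  liftAlgHom _ (Algebra.ofId K K) 0 (by simp [hn])

theorem constantCoeff_root (hn : n ≠ 0) : constantCoeff (K := K) hn (root _) = 0 :=
  liftAlgHom_root ..

theorem root_X_pow_pow_pred_notMem_span_one (hn : 2 ≤ n) :
    root (X ^ n : K[X]) ^ (n - 1) ∉ K ∙ 1 := fun h => by
  obtain ⟨c, hc⟩ := Submodule.mem_span_singleton.1 h
  have hc0 : c = 0 := by
    simpa [constantCoeff_root, show n - 1 ≠ 0 by omega] using
      congrArg (constantCoeff (K := K) (show n ≠ 0 by omega)) hc
  exact root_X_pow_pow_ne_zero (show n - 1 < n by omega) (by rw [← hc, hc0, zero_smul])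

theorem card_finrank_eq_two_one_mem_root_pow_notMem [Finite K] (hn : 2 ≤ n) :
    Nat.card {W : Submodule K (AdjoinRoot (X ^ n : K[X])) //
        finrank K W = 2 ∧ 1 ∈ W ∧ root (X ^ n : K[X]) ^ (n - 1) ∉ W} =
      Nat.card K * ∑ i ∈ Finset.range (n - 2), Nat.card K ^ i := by
  have : FiniteDimensional K (AdjoinRoot (X ^ n : K[X])) := (monic_X_pow n).finite_adjoinRoot
  have h1 : (1 : AdjoinRoot (X ^ n : K[X])) ≠ 0 := by
    simpa using root_X_pow_pow_ne_zero (K := K) (show 0 < n by omega)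
  have h := Submodule.card_finrank_eq_two_mem_notMem_add_one h1
    (root_X_pow_pow_pred_notMem_span_one hn)
  rw [finrank_X_pow, show Finset.range (n - 1) = Finset.range (n - 2 + 1) by congr 1; omega,
    Finset.sum_range_succ', pow_zero, add_left_inj] at h
  simpa only [Finset.mul_sum, pow_succ'] using h

end AdjoinRoot

open Polynomial in
/-- for a finite field `K` with `q` elements, `A = K[e]/(e^n)`, and the
equivalence `V ∼ W ⟺ γV = W` for some unit `γ ∈ A^×` on the set `X` of 2-dimensional
subspaces of `A` containing `1` but not `e^(n-1)`: every equivalence class has at most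
`q` elements, and the number of classes is at least `(q^(n-2) - 1)/(q - 1) ≥ q^(n-3)`. -/
theorem stmt_14 (K : Type*) [Field K] [Fintype K] (q : ℕ) (hq : Fintype.card K = q)
    (n : ℕ) (hn : 4 ≤ n)
    (e : AdjoinRoot (X ^ n : K[X])) (he : e = AdjoinRoot.root (X ^ n : K[X]))
    (r : {W : Submodule K (AdjoinRoot (X ^ n : K[X])) //
        Module.finrank K W = 2 ∧ (1 : AdjoinRoot (X ^ n : K[X])) ∈ W ∧ e ^ (n - 1) ∉ W} →
      {W : Submodule K (AdjoinRoot (X ^ n : K[X])) //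
        Module.finrank K W = 2 ∧ (1 : AdjoinRoot (X ^ n : K[X])) ∈ W ∧ e ^ (n - 1) ∉ W} → Prop)
    (hr : ∀ V W, r V W ↔ ∃ γ : (AdjoinRoot (X ^ n : K[X]))ˣ,
      Submodule.map (LinearMap.mulLeft K (γ : AdjoinRoot (X ^ n : K[X]))) V.1 = W.1) :
    (∀ V, Nat.card {W // r V W} ≤ q) ∧
      (q ^ (n - 2) - 1) / (q - 1) ≤ Nat.card (Quot r) ∧
      q ^ (n - 3) ≤ (q ^ (n - 2) - 1) / (q - 1) := by
  subst he
  rw [Fintype.card_eq_nat_card] at hq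
  subst hq
  have := (monic_X_pow n).finite_adjoinRoot (R := K)
  have : Finite (AdjoinRoot (X ^ n : K[X])) := Module.finite_of_finite K
  have hclass (V) : Nat.card {W // r V W} ≤ Nat.card K :=
    (Nat.card_le_card_of_injective (fun W => ⟨W.1.1, W.1.2.2.1, (hr V W.1).1 W.2⟩)
      fun W W' h => Subtype.ext (Subtype.ext (by simpa using h))).trans
    (card_one_mem_units_smul_le (AdjoinRoot.constantCoeff (by omega)) V.2.1 V.2.2.1)
  have hequiv : Equivalence r := by
    obtain rfl : r = _ := funext₂ fun V W => propext (hr V W)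
    exact (MulAction.equivalence_exists_smul_eq _ _).comap Subtype.val
  have hquot := Nat.card_le_mul_card_quot hequiv hclass
  rw [AdjoinRoot.card_finrank_eq_two_one_mem_root_pow_notMem (by omega)] at hquot
  rw [← Nat.geomSum_eq Finite.one_lt_card (n - 2)]
  exact ⟨hclass, Nat.le_of_mul_le_mul_left hquot Nat.card_pos,
    Finset.single_le_sum (fun i _ => Nat.zero_le _) (by simp; omega)⟩
end

section
/- Let K be a field, A = K[e]/(e^4), and for λ_2, λ_3 ∈ K let V(1, λ_2, λ_3) = span{e_0, e_1 + λ_2 e_2 + λ_3 e_3}. Then for every θ ∈ K, θ ≠ 0, writing f = e_1 + λ_2 e_2 + λ_3 e_3, one has (e_0 + θf)^{-1} V(1, λ_2, λ_3) = V(1, λ_2 - θ, θ² - 2θλ_2 + λ_3). -/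
section Aux

variable {A : Type*} [CommRing A]

private lemma aux1 (T L2 L3 e : A) (h4 : e ^ 4 = 0) :
    (1 + T * (e + L2 * e ^ 2 + L3 * e ^ 3)) *
      (1 - T * (e + L2 * e ^ 2 + L3 * e ^ 3) + T ^ 2 * (e + L2 * e ^ 2 + L3 * e ^ 3) ^ 2
        - T ^ 3 * (e + L2 * e ^ 2 + L3 * e ^ 3) ^ 3) = 1 := by
  linear_combination ((-1)*T^4 + (-4)*T^4*L3*e^2 + (-6)*T^4*L3^2*e^4 + (-4)*T^4*L3^3*e^6 + (-1)*T^4*L3^4*e^8 + (-4)*T^4*L2*e + (-12)*T^4*L2*L3*e^3 + (-12)*T^4*L2*L3^2*e^5 + (-4)*T^4*L2*L3^3*e^7 + (-6)*T^4*L2^2*e^2 + (-12)*T^4*L2^2*L3*e^4 + (-6)*T^4*L2^2*L3^2*e^6 + (-4)*T^4*L2^3*e^3 + (-4)*T^4*L2^3*L3*e^5 + (-1)*T^4*L2^4*e^4) * h4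

private lemma aux2 (T L2 L3 e : A) (h4 : e ^ 4 = 0) :
    (1 - T * (e + L2 * e ^ 2 + L3 * e ^ 3) + T ^ 2 * (e + L2 * e ^ 2 + L3 * e ^ 3) ^ 2
        - T ^ 3 * (e + L2 * e ^ 2 + L3 * e ^ 3) ^ 3) * (e + L2 * e ^ 2 + L3 * e ^ 3) =
      e + (L2 - T) * e ^ 2 + (T ^ 2 - 2 * T * L2 + L3) * e ^ 3 := by
  linear_combination ((-2)*T*L3 + (-1)*T*L3^2*e^2 + (-2)*T*L2*L3*e + (-1)*T*L2^2 + (3)*T^2*L3*e + (3)*T^2*L3^2*e^3 + (1)*T^2*L3^3*e^5 + (3)*T^2*L2 + (6)*T^2*L2*L3*e^2 + (3)*T^2*L2*L3^2*e^4 + (3)*T^2*L2^2*e + (3)*T^2*L2^2*L3*e^3 + (1)*T^2*L2^3*e^2 + (-1)*T^3 + (-4)*T^3*L3*e^2 + (-6)*T^3*L3^2*e^4 + (-4)*T^3*L3^3*e^6 + (-1)*T^3*L3^4*e^8 + (-4)*T^3*L2*e + (-12)*T^3*L2*L3*e^3 + (-12)*T^3*L2*L3^2*e^5 + (-4)*T^3*L2*L3^3*e^7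 + (-6)*T^3*L2^2*e^2 + (-12)*T^3*L2^2*L3*e^4 + (-6)*T^3*L2^2*L3^2*e^6 + (-4)*T^3*L2^3*e^3 + (-4)*T^3*L2^3*L3*e^5 + (-1)*T^3*L2^4*e^4) * h4

private lemma aux3 (T L2 L3 e : A) (h4 : e ^ 4 = 0) :
    1 - T * (e + L2 * e ^ 2 + L3 * e ^ 3) + T ^ 2 * (e + L2 * e ^ 2 + L3 * e ^ 3) ^ 2
        - T ^ 3 * (e + L2 * e ^ 2 + L3 * e ^ 3) ^ 3 =
      1 - T * (e + (L2 - T) * e ^ 2 + (T ^ 2 - 2 * T * L2 + L3) * e ^ 3) := by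
  linear_combination ((2)*T^2*L3 + (1)*T^2*L3^2*e^2 + (2)*T^2*L2*L3*e + (1)*T^2*L2^2 + (-3)*T^3*L3*e + (-3)*T^3*L3^2*e^3 + (-1)*T^3*L3^3*e^5 + (-3)*T^3*L2 + (-6)*T^3*L2*L3*e^2 + (-3)*T^3*L2*L3^2*e^4 + (-3)*T^3*L2^2*e + (-3)*T^3*L2^2*L3*e^3 + (-1)*T^3*L2^3*e^2) * h4

end Aux

open Polynomial in
/-- in `A = K[e]/(e^4)`, with `V(1,λ₂,λ₃) = span{1, f}` where
`f = e + λ₂e² + λ₃e³`, for every `θ ≠ 0` the element `1 + θf` is a unit and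
`(1 + θf)⁻¹ · V(1,λ₂,λ₃) = V(1, λ₂ - θ, θ² - 2θλ₂ + λ₃)`. -/
theorem stmt_16 (K : Type*) [Field K]
    (e : AdjoinRoot (X ^ 4 : K[X])) (he : e = AdjoinRoot.root (X ^ 4 : K[X]))
    (Vs : K → K → Submodule K (AdjoinRoot (X ^ 4 : K[X])))
    (hVs : ∀ lam₂ lam₃ : K, Vs lam₂ lam₃ =
      Submodule.span K {1, e + lam₂ • e ^ 2 + lam₃ • e ^ 3})
    (lam₂ lam₃ θ : K) (hθ : θ ≠ 0) :
    ∃ u : (AdjoinRoot (X ^ 4 : K[X]))ˣ,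
      (u : AdjoinRoot (X ^ 4 : K[X])) = 1 + θ • (e + lam₂ • e ^ 2 + lam₃ • e ^ 3) ∧
      Submodule.map (LinearMap.mulLeft K ((u⁻¹ : _ˣ) : AdjoinRoot (X ^ 4 : K[X])))
          (Vs lam₂ lam₃) =
        Vs (lam₂ - θ) (θ ^ 2 - 2 * θ * lam₂ + lam₃) := by
  classical
  have h4 : e ^ 4 = 0 := by
    rw [he, ← AdjoinRoot.mk_X, ← map_pow, AdjoinRoot.mk_self]
  set a : K → AdjoinRoot (X ^ 4 : K[X]) := fun c => algebraMap K (AdjoinRoot (X ^ 4 : K[X])) c with ha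
  have hsm : ∀ (c : K) (x : AdjoinRoot (X ^ 4 : K[X])), c • x = a c * x := fun c x => Algebra.smul_def c x
  set f : AdjoinRoot (X ^ 4 : K[X]) := e + lam₂ • e ^ 2 + lam₃ • e ^ 3 with hf
  set g : AdjoinRoot (X ^ 4 : K[X]) := e + (lam₂ - θ) • e ^ 2 + (θ ^ 2 - 2 * θ * lam₂ + lam₃) • e ^ 3 with hg
  have hfm : f = e + a lam₂ * e ^ 2 + a lam₃ * e ^ 3 := by rw [hf, hsm, hsm]
  have hgm : g = e + (a lam₂ - a θ) * e ^ 2 +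
      ((a θ) ^ 2 - 2 * a θ * a lam₂ + a lam₃) * e ^ 3 := by
    rw [hg, hsm, hsm, ha]
    simp only [map_sub, map_add, map_mul, map_pow, map_ofNat]
  set v : AdjoinRoot (X ^ 4 : K[X]) := 1 - a θ * f + (a θ) ^ 2 * f ^ 2 - (a θ) ^ 3 * f ^ 3 with hv
  have huv : (1 + θ • f) * v = 1 := by
    rw [hsm, hv, hfm]; exact aux1 (a θ) (a lam₂) (a lam₃) e h4
  have hvf : v * f = g := by
    rw [hv, hfm, hgm]; exact aux2 (a θ) (a lam₂) (a lam₃) e h4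
  have hvg : v = 1 - a θ * g := by
    rw [hv, hfm, hgm]; exact aux3 (a θ) (a lam₂) (a lam₃) e h4
  refine ⟨⟨1 + θ • f, v, huv, by rw [mul_comm]; exact huv⟩, rfl, ?_⟩
  have hinv : ((((⟨1 + θ • f, v, huv, by rw [mul_comm]; exact huv⟩ :
      (AdjoinRoot (X ^ 4 : K[X]))ˣ)⁻¹ : _ˣ)) : AdjoinRoot (X ^ 4 : K[X])) = v := rfl
  rw [hinv, hVs, hVs, Submodule.map_span]
  have himg : (⇑(LinearMap.mulLeft K v)) '' {1, f} = {v, g} := by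
    rw [Set.image_insert_eq, Set.image_singleton]
    simp [LinearMap.mulLeft_apply, hvf]
  rw [himg]
  apply le_antisymm
  · rw [Submodule.span_le]
    rintro x hx
    rcases hx with rfl | rfl
    · refine Submodule.mem_span_pair.mpr ⟨1, -θ, ?_⟩
      rw [one_smul, hsm, hvg, show a (-θ) = -a θ from by simp [ha]]; ring
    · exact Submodule.subset_span (Set.mem_insert_of_mem _ rfl)
  · rw [Submodule.span_le]
    rintro x hx
    rcases hx with rfl | rfl
    · refine Submodule.mem_span_pair.mpr ⟨1, θ, ?_⟩
      rw [one_smul, hsm, hvg]; ring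
    · exact Submodule.subset_span (Set.mem_insert_of_mem _ rfl)
end

section
/- Let K be a field, A = K[e]/(e^4), and for λ_3 ∈ K let V(0, 1, λ_3) = span{e_0, e_2 + λ_3 e_3}. Then for every θ ∈ K, writing f = e_2 + λ_3 e_3, one has (e_0 + θf)^{-1} V(0, 1, λ_3) = V(0, 1, λ_3); i.e., V(0,1,λ_3) is fixed by multiplication by the inverse of any of its units. Consequently, if γ is any unit of A with γ V(0,1,λ_3) = V(0,1,λ_3') then λ_3 = λ_3'. -/
/-!
Any two elements `f = e² + λe³`, `f' = e² + λ'e³` satisfy `f f' = 0`. Hence `1 + θf` has inverse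
`1 - θf`, which sends `1 ↦ 1 - θf` and fixes `f`, so it preserves `span{1, f}`. Conversely, if a
unit `γ` maps `span{1, f}` onto `span{1, f'}`, then `γ = a + b f'`, so `γ f = a f` lies in
`span{1, f'}`; as `γ f ≠ 0`, `a ≠ 0` and `f ∈ span{1, f'}`, and comparing coefficients in the
basis `1, e, e², e³` gives `λ = λ'`.
-/

open Polynomial Submodule

section SquareZero

variable {K A : Type*} [Field K] [CommRing A] [Algebra K A]

theorem map_mulLeft_one_sub_smul_span_pair {f : A} (hf : f * f = 0) (θ : K) :
    (span K {1, f}).map (LinearMap.mulLeft K (1 - θ • f)) = span K {1, f} := by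
  have hfix : (1 - θ • f) * f = f := by
    rw [sub_mul, one_mul, smul_mul_assoc, hf, smul_zero, sub_zero]
  rw [map_span, Set.image_pair, LinearMap.mulLeft_apply, LinearMap.mulLeft_apply, mul_one, hfix]
  apply le_antisymm <;> rw [span_le] <;> rintro x (rfl | rfl)
  · exact mem_span_pair.mpr ⟨1, -θ, by module⟩
  · exact subset_span (by simp)
  · exact mem_span_pair.mpr ⟨1, θ, by module⟩
  · exact subset_span (by simp)

theorem mem_span_pair_of_map_mulLeft_eq {f f' : A} (hff' : f' * f = 0) (γ : Aˣ)
    (h : (span K {1, f}).map (LinearMap.mulLeft K (γ : A)) = span K {1, f'}) :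
    f ∈ span K {1, f'} := by
  have hγ : (γ : A) ∈ span K {1, f'} := h ▸ ⟨1, subset_span (by simp), mul_one _⟩
  have hγf : (γ : A) * f ∈ span K {1, f'} := h ▸ ⟨f, subset_span (by simp), rfl⟩
  obtain ⟨a, b, hab⟩ := mem_span_pair.mp hγ
  have hγf_eq : (γ : A) * f = a • f := by
    rw [← hab, add_mul, smul_mul_assoc, smul_mul_assoc, one_mul, hff', smul_zero, add_zero]
  by_cases ha : a = 0
  · have hf : f = 0 := by
      simpa [ha] using congrArg ((↑γ⁻¹ : A) * ·) hγf_eq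
    exact hf ▸ zero_mem _
  · rw [hγf_eq] at hγf
    simpa [smul_smul, inv_mul_cancel₀ ha] using smul_mem _ a⁻¹ hγf

end SquareZero

section TruncatedPolynomial

variable (K : Type*) [Field K]

theorem linearIndependent_root_X_pow (n : ℕ) :
    LinearIndependent K (fun i : Fin n => AdjoinRoot.root (X ^ n : K[X]) ^ (i : ℕ)) := by
  have hX : (X ^ n : K[X]) ≠ 0 := pow_ne_zero _ X_ne_zero
  have hdim : (AdjoinRoot.powerBasis hX).dim = n := by simp [AdjoinRoot.powerBasis_dim]
  convert (AdjoinRoot.powerBasis hX).basis.linearIndependent.comp (finCongr hdim.symm)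
    (finCongr hdim.symm).injective using 1
  · funext i
    simp [AdjoinRoot.powerBasis_gen]
  · rfl

variable {K}

theorem root_X_pow_four_pow_four : AdjoinRoot.root (X ^ 4 : K[X]) ^ 4 = 0 := by
  rw [← AdjoinRoot.mk_X, ← map_pow, AdjoinRoot.mk_self]

theorem sq_add_smul_cube_mul_sq_add_smul_cube {A : Type*} [CommRing A] [Algebra K A] {e : A}
    (he : e ^ 4 = 0) (l l' : K) : (e ^ 2 + l • e ^ 3) * (e ^ 2 + l' • e ^ 3) = 0 := by
  simp only [Algebra.smul_def]
  linear_combination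
    (1 + (algebraMap K A l + algebraMap K A l') * e + algebraMap K A l * algebraMap K A l' * e ^ 2)
      * he

theorem eq_of_sq_add_smul_cube_mem_span_pair {l l' : K}
    (h : AdjoinRoot.root (X ^ 4 : K[X]) ^ 2 + l • AdjoinRoot.root (X ^ 4 : K[X]) ^ 3 ∈
      span K {1, AdjoinRoot.root (X ^ 4 : K[X]) ^ 2 + l' • AdjoinRoot.root (X ^ 4 : K[X]) ^ 3}) :
    l = l' := by
  obtain ⟨c, d, hcd⟩ := mem_span_pair.mp h
  have hcoeff := Fintype.linearIndependent_iff.mp (linearIndependent_root_X_pow K 4)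
    ![c, 0, d - 1, d * l' - l] (by
      simp only [Fin.sum_univ_four, Matrix.cons_val, Fin.isValue, Fin.val_zero, Fin.val_one,
        Fin.val_two, pow_zero, pow_one]
      show _ + _ + _ + (d * l' - l) • AdjoinRoot.root (X ^ 4 : K[X]) ^ 3 = 0
      linear_combination (norm := module) hcd)
  have hd : d = 1 := sub_eq_zero.mp (by simpa using hcoeff 2)
  have hl : d * l' - l = 0 := by simpa using hcoeff 3
  rw [hd, one_mul, sub_eq_zero] at hl
  exact hl.symm

end TruncatedPolynomial

/-- in `A = K[e]/(e^4)`, with `V(0,1,λ₃) = span{1, e² + λ₃e³}` and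
`f = e² + λ₃e³`, for every `θ ∈ K` the element `1 + θf` is a unit and
`(1 + θf)⁻¹ · V(0,1,λ₃) = V(0,1,λ₃)`; consequently if `γ` is any unit of `A` with
`γ·V(0,1,λ₃) = V(0,1,λ₃')`, then `λ₃ = λ₃'`. -/
theorem stmt_17 (K : Type*) [Field K]
    (e : AdjoinRoot (X ^ 4 : K[X])) (he : e = AdjoinRoot.root (X ^ 4 : K[X]))
    (Vs : K → Submodule K (AdjoinRoot (X ^ 4 : K[X])))
    (hVs : ∀ lam₃ : K, Vs lam₃ = Submodule.span K {1, e ^ 2 + lam₃ • e ^ 3}) :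
    (∀ lam₃ θ : K,
      ∃ u : (AdjoinRoot (X ^ 4 : K[X]))ˣ,
        (u : AdjoinRoot (X ^ 4 : K[X])) = 1 + θ • (e ^ 2 + lam₃ • e ^ 3) ∧
        Submodule.map (LinearMap.mulLeft K ((u⁻¹ : _ˣ) : AdjoinRoot (X ^ 4 : K[X])))
          (Vs lam₃) = Vs lam₃) ∧
    (∀ lam₃ lam₃' : K, ∀ γ : (AdjoinRoot (X ^ 4 : K[X]))ˣ,
      Submodule.map (LinearMap.mulLeft K (γ : AdjoinRoot (X ^ 4 : K[X]))) (Vs lam₃) =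
        Vs lam₃' → lam₃ = lam₃') := by
  subst he
  have hff := sq_add_smul_cube_mul_sq_add_smul_cube (K := K) (root_X_pow_four_pow_four (K := K))
  refine ⟨fun l θ => ?_, fun l l' γ h => ?_⟩
  · set f := AdjoinRoot.root (X ^ 4 : K[X]) ^ 2 + l • AdjoinRoot.root (X ^ 4 : K[X]) ^ 3
    have hθf : θ • f * θ • f = 0 := by rw [smul_mul_smul_comm, hff, smul_zero]
    have hinv : (1 + θ • f) * (1 - θ • f) = 1 := by
      rw [← mul_self_sub_mul_self, hθf, mul_one, sub_zero]
    refine ⟨⟨1 + θ • f, 1 - θ • f, hinv, mul_comm (1 - θ • f) _ ▸ hinv⟩, rfl, ?_⟩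
    rw [hVs]
    exact map_mulLeft_one_sub_smul_span_pair (hff l l) θ
  · rw [hVs, hVs] at h
    exact eq_of_sq_add_smul_cube_mem_span_pair (mem_span_pair_of_map_mulLeft_eq (hff l' l) γ h)
end
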